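/- arXiv:math/0306222 — 2 statements merged into one kernel-verified Lean document; each statement's English description precedes it below -/
import Mathlib

section
/- For integers p, q ≥ 0 with p + q ≥ 1 and any integer n ≥ 1: ((n)_p / p!) · ((n)_q / q!) = Σ_{k=1}^{min(n, p+q)} binom(n,k) · (k/(p+q)) · C(p+q, p; k), where (x)_m = x(x+1)⋯(x+m-1) is the raising factorial and C(n,p;k) = (n/k)·Σ_{r≥0} binom(p,r)·binom(n-p,r)·binom(n-r-1,k-r-1). -/
/-- Generalized binomial coefficient `C(n,p;k) = (n/k) · Σ_{r≥0}
binom(p,r)·binom(n-p,r)·binom(n-r-1,k-r-1)`.  The sum is over `0 ≤ r ≤ k-1`,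
which covers every nonzero term since `binom(n-r-1,k-r-1) = 0` for `r ≥ k`
(negative lower index in the usual convention). -/
def Cgen (n p k : ℕ) : ℚ :=
  (n : ℚ) / (k : ℚ) *
    ∑ r ∈ Finset.range k,
      ((p.choose r : ℚ) * ((n - p).choose r : ℚ) * ((n - r - 1).choose (k - r - 1) : ℚ))



open Finset

/-- Vandermonde over a range. -/
lemma vand_range' (a b k : ℕ) :
    (a + b).choose k = ∑ s ∈ range (k + 1), a.choose s * b.choose (k - s) := by
  rw [Nat.add_choose_eq, Finset.Nat.sum_antidiagonal_eq_sum_range_succ_mk]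

/-- Truncated Vandermonde. -/
lemma vand_trunc (a b k t : ℕ) (h1 : a ≤ t) (h2 : t ≤ k) :
    (a + b).choose k = ∑ s ∈ range (t + 1), a.choose s * b.choose (k - s) := by
  rw [vand_range']
  symm
  apply Finset.sum_subset (Finset.range_subset_range.mpr (by omega))
  intro s hs hns
  simp only [Finset.mem_range] at hs hns
  have : a < s := by omega
  rw [Nat.choose_eq_zero_of_lt this, Nat.zero_mul]

/-- Diagonal Vandermonde: `∑ r, C(a,r)·C(b,r) = C(a+b, a)`. -/
lemma vand_diag (a b t : ℕ) (h : a ≤ t) :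
    ∑ r ∈ range (t + 1), a.choose r * b.choose r = (a + b).choose a := by
  have h0 : (a + b).choose a = ∑ s ∈ range (a + 1), a.choose s * b.choose (a - s) :=
    vand_trunc a b a a le_rfl le_rfl
  have h1 : ∑ s ∈ range (a + 1), a.choose (a - s) * b.choose (a - (a - s))
      = ∑ s ∈ range (a + 1), a.choose s * b.choose (a - s) := by
    have := Finset.sum_range_reflect (fun s => a.choose s * b.choose (a - s)) (a + 1)
    simpa using this
  have h2 : ∑ s ∈ range (a + 1), a.choose (a - s) * b.choose (a - (a - s))
      = ∑ s ∈ range (a + 1), a.choose s * b.choose s := by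
    apply Finset.sum_congr rfl
    intro s hs
    simp only [Finset.mem_range] at hs
    have hsa : s ≤ a := by omega
    rw [Nat.choose_symm hsa, Nat.sub_sub_self hsa]
  have h3 : ∑ s ∈ range (a + 1), a.choose s * b.choose s = (a + b).choose a := by
    rw [← h2, h1, ← h0]
  rw [← h3]
  symm
  apply Finset.sum_subset (Finset.range_subset_range.mpr (by omega))
  intro s hs hns
  simp only [Finset.mem_range] at hs hns
  rw [Nat.choose_eq_zero_of_lt (by omega), Nat.zero_mul]

/-- Subset-of-subset swap: `C(p,r)·C(p-r,s) = C(p,s)·C(p-s,r)`. -/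
lemma choose_sub_swap (p r s : ℕ) :
    p.choose r * (p - r).choose s = p.choose s * (p - s).choose r := by
  have key : ∀ u v : ℕ, u + v ≤ p →
      p.choose u * (p - u).choose v = p.choose (u + v) * (u + v).choose u := by
    intro u v huv
    have := Nat.choose_mul (n := p) (k := u + v) (s := u) (Nat.le_add_right u v)
    rw [this, Nat.add_sub_cancel_left]
  rcases le_or_gt (r + s) p with h | h
  · rw [key r s h, key s r (by omega)]
    rw [Nat.add_comm s r, Nat.choose_symm_add]
  · rcases le_or_gt r p with hr | hr
    · rw [Nat.choose_eq_zero_of_lt (show p - r < s by omega), Nat.mul_zero]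
      rcases le_or_gt s p with hs | hs
      · rw [Nat.choose_eq_zero_of_lt (show p - s < r by omega), Nat.mul_zero]
      · rw [Nat.choose_eq_zero_of_lt hs, Nat.zero_mul]
    · rw [Nat.choose_eq_zero_of_lt hr, Nat.zero_mul,
        Nat.choose_eq_zero_of_lt (show p - s < r by omega), Nat.mul_zero]

/-- Trinomial revision form. -/
lemma trinom' (x q m : ℕ) :
    (x + q).choose (m + q) * (m + q).choose q = (x + q).choose q * x.choose m := by
  rcases le_or_gt m x with h | h
  · have := Nat.choose_mul (n := x + q) (k := m + q) (s := q)
      (Nat.le_add_left q m)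
    rw [this, Nat.add_sub_cancel, Nat.add_sub_cancel]
  · rw [Nat.choose_eq_zero_of_lt (show x + q < m + q by omega),
      Nat.choose_eq_zero_of_lt h, Nat.zero_mul, Nat.mul_zero]

/-- Surányi's identity. -/
lemma suranyi (x p q : ℕ) :
    ∑ r ∈ range (p + 1), p.choose r * q.choose r * (x + p + q - r).choose (p + q)
      = (x + p).choose p * (x + q).choose q := by
  have step1 : ∑ r ∈ range (p + 1), p.choose r * q.choose r * (x + p + q - r).choose (p + q)
      = ∑ r ∈ range (p + 1), ∑ s ∈ range (p + 1),
          p.choose r * q.choose r * ((p - r).choose s * (x + q).choose (p + q - s)) := by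
    apply Finset.sum_congr rfl
    intro r hr
    simp only [Finset.mem_range] at hr
    rw [show x + p + q - r = (p - r) + (x + q) by omega,
      vand_trunc (p - r) (x + q) (p + q) p (by omega) (by omega), Finset.mul_sum]
  rw [step1, Finset.sum_comm]
  have step2 : ∀ s ∈ range (p + 1),
      ∑ r ∈ range (p + 1), p.choose r * q.choose r * ((p - r).choose s * (x + q).choose (p + q - s))
      = p.choose s * ((p - s) + q).choose (p - s) * (x + q).choose (p + q - s) := by
    intro s hs
    simp only [Finset.mem_range] at hs
    have : ∀ r ∈ range (p + 1),
        p.choose r * q.choose r * ((p - r).choose s * (x + q).choose (p + q - s))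
        = p.choose s * ((p - s).choose r * q.choose r) * (x + q).choose (p + q - s) := by
      intro r hr
      have := choose_sub_swap p r s
      calc p.choose r * q.choose r * ((p - r).choose s * (x + q).choose (p + q - s))
          = (p.choose r * (p - r).choose s) * q.choose r * (x + q).choose (p + q - s) := by ring
        _ = (p.choose s * (p - s).choose r) * q.choose r * (x + q).choose (p + q - s) := by rw [this]
        _ = p.choose s * ((p - s).choose r * q.choose r) * (x + q).choose (p + q - s) := by ring
    rw [Finset.sum_congr rfl this, ← Finset.sum_mul, ← Finset.mul_sum,
      vand_diag (p - s) q p (by omega)]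
  rw [Finset.sum_congr rfl step2]
  have step3 : ∀ s ∈ range (p + 1),
      p.choose s * ((p - s) + q).choose (p - s) * (x + q).choose (p + q - s)
      = p.choose s * x.choose (p - s) * (x + q).choose q := by
    intro s hs
    simp only [Finset.mem_range] at hs
    have hsym : ((p - s) + q).choose (p - s) = ((p - s) + q).choose q := by
      exact Nat.choose_symm_add
    have ht := trinom' x q (p - s)
    have hpq : p + q - s = (p - s) + q := by omega
    calc p.choose s * ((p - s) + q).choose (p - s) * (x + q).choose (p + q - s)
        = p.choose s * ((x + q).choose ((p - s) + q) * ((p - s) + q).choose q) := by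
          rw [hsym, hpq]; ring
      _ = p.choose s * ((x + q).choose q * x.choose (p - s)) := by rw [ht]
      _ = p.choose s * x.choose (p - s) * (x + q).choose q := by ring
  rw [Finset.sum_congr rfl step3, ← Finset.sum_mul]
  congr 1
  have := vand_trunc p x p p le_rfl le_rfl
  rw [Nat.add_comm x p, this]

/-- Shifted Vandermonde for the inner `k`-sum. -/
lemma vand_shift (n m r : ℕ) :
    ∑ j ∈ range (m + 1), n.choose (r + 1 + j) * m.choose j
      = (n + m).choose (m + r + 1) := by
  have h0 : (m + n).choose (m + r + 1)
      = ∑ s ∈ range (m + 1), m.choose s * n.choose (m + r + 1 - s) :=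
    vand_trunc m n (m + r + 1) m le_rfl (by omega)
  have h1 : ∑ s ∈ range (m + 1), m.choose (m - s) * n.choose (m + r + 1 - (m - s))
      = ∑ s ∈ range (m + 1), m.choose s * n.choose (m + r + 1 - s) := by
    have := Finset.sum_range_reflect
      (fun s => m.choose s * n.choose (m + r + 1 - s)) (m + 1)
    simpa using this
  have h2 : ∑ s ∈ range (m + 1), m.choose (m - s) * n.choose (m + r + 1 - (m - s))
      = ∑ j ∈ range (m + 1), n.choose (r + 1 + j) * m.choose j := by
    apply Finset.sum_congr rfl
    intro s hs
    simp only [Finset.mem_range] at hs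
    have hsm : s ≤ m := by omega
    rw [Nat.choose_symm hsm, show m + r + 1 - (m - s) = r + 1 + s by omega, Nat.mul_comm]
  rw [← h2, h1, ← h0, Nat.add_comm m n]

/-- The main natural-number identity. -/
lemma main_nat (n p q : ℕ) (hn : 1 ≤ n) (hpq : 1 ≤ p + q) :
    ∑ k ∈ Finset.Icc 1 (p + q), n.choose k *
        ∑ r ∈ range k, p.choose r * q.choose r * (p + q - r - 1).choose (k - r - 1)
      = (n - 1 + p).choose p * (n - 1 + q).choose q := by
  -- distribute and swap
  have hswap : ∑ k ∈ Finset.Icc 1 (p + q), ∑ r ∈ range k,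
        n.choose k * (p.choose r * q.choose r * (p + q - r - 1).choose (k - r - 1))
      = ∑ r ∈ range (p + q), ∑ k ∈ Finset.Icc (r + 1) (p + q),
        n.choose k * (p.choose r * q.choose r * (p + q - r - 1).choose (k - r - 1)) := by
    apply Finset.sum_comm'
    intro k r
    simp only [Finset.mem_Icc, Finset.mem_range]
    omega
  calc ∑ k ∈ Finset.Icc 1 (p + q), n.choose k *
        ∑ r ∈ range k, p.choose r * q.choose r * (p + q - r - 1).choose (k - r - 1)
      = ∑ k ∈ Finset.Icc 1 (p + q), ∑ r ∈ range k,
        n.choose k * (p.choose r * q.choose r * (p + q - r - 1).choose (k - r - 1)) := by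
        exact Finset.sum_congr rfl fun k _ => Finset.mul_sum _ _ _
    _ = ∑ r ∈ range (p + q), ∑ k ∈ Finset.Icc (r + 1) (p + q),
        n.choose k * (p.choose r * q.choose r * (p + q - r - 1).choose (k - r - 1)) := hswap
    _ = ∑ r ∈ range (p + q),
          p.choose r * q.choose r * ((n - 1) + p + q - r).choose (p + q) := by
        apply Finset.sum_congr rfl
        intro r hr
        simp only [Finset.mem_range] at hr
        set m := p + q - r - 1 with hm
        have hIcc : Finset.Icc (r + 1) (p + q) = Finset.Ico (r + 1) (p + q + 1) :=
          (Finset.Ico_add_one_right_eq_Icc _ _).symm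
        rw [hIcc, Finset.sum_Ico_eq_sum_range]
        have hcount : p + q + 1 - (r + 1) = m + 1 := by omega
        rw [hcount]
        have : ∀ j ∈ range (m + 1),
            n.choose (r + 1 + j) * (p.choose r * q.choose r * m.choose (r + 1 + j - r - 1))
            = p.choose r * q.choose r * (n.choose (r + 1 + j) * m.choose j) := by
          intro j hj
          rw [show r + 1 + j - r - 1 = j by omega]
          ring
        rw [Finset.sum_congr rfl this, ← Finset.mul_sum, vand_shift n m r,
          show n + m = (n - 1) + p + q - r by omega,
          show m + r + 1 = p + q by omega]
    _ = ∑ r ∈ range (p + 1),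
          p.choose r * q.choose r * ((n - 1) + p + q - r).choose (p + q) := by
        have hzero : ∀ r, p + q ≤ r ∨ p + 1 ≤ r →
            p.choose r * q.choose r * ((n - 1) + p + q - r).choose (p + q) = 0 := by
          intro r hr
          rcases le_or_gt (p + 1) r with h | h
          · rw [Nat.choose_eq_zero_of_lt (by omega), Nat.zero_mul, Nat.zero_mul]
          · have hq0 : q = 0 := by omega
            have hrp : r = p := by omega
            have hp1 : 1 ≤ p := by omega
            rw [hq0, hrp, Nat.choose_eq_zero_of_lt (show 0 < p from hp1), Nat.mul_zero,
              Nat.zero_mul]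
        have e1 : ∑ r ∈ range (p + q),
              p.choose r * q.choose r * ((n - 1) + p + q - r).choose (p + q)
            = ∑ r ∈ range (p + q + (p + 1)),
              p.choose r * q.choose r * ((n - 1) + p + q - r).choose (p + q) := by
          apply Finset.sum_subset (Finset.range_subset_range.mpr (by omega))
          intro r _ hr
          simp only [Finset.mem_range] at hr
          exact hzero r (Or.inl (by omega))
        have e2 : ∑ r ∈ range (p + 1),
              p.choose r * q.choose r * ((n - 1) + p + q - r).choose (p + q)
            = ∑ r ∈ range (p + q + (p + 1)),
              p.choose r * q.choose r * ((n - 1) + p + q - r).choose (p + q) := by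
          apply Finset.sum_subset (Finset.range_subset_range.mpr (by omega))
          intro r _ hr
          simp only [Finset.mem_range] at hr
          exact hzero r (Or.inr (by omega))
        rw [e1, ← e2]
    _ = (n - 1 + p).choose p * (n - 1 + q).choose q := suranyi (n - 1) p q

theorem pochhammer_product_expansion (n p q : ℕ) (hn : 1 ≤ n) (hpq : 1 ≤ p + q) :
    (ascPochhammer ℚ p).eval (n : ℚ) / (p.factorial : ℚ) *
      ((ascPochhammer ℚ q).eval (n : ℚ) / (q.factorial : ℚ)) =
    ∑ k ∈ Finset.Icc 1 (min n (p + q)),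
      (n.choose k : ℚ) * ((k : ℚ) / ((p + q : ℕ) : ℚ)) * Cgen (p + q) p k := by
  have key := main_nat n p q hn hpq
  have hasc : ∀ m : ℕ, (ascPochhammer ℚ m).eval (n : ℚ) / (m.factorial : ℚ)
      = ((n - 1 + m).choose m : ℚ) := by
    intro m
    rw [← ascPochhammer_eval_cast, ascPochhammer_nat_eq_ascFactorial,
      Nat.ascFactorial_eq_factorial_mul_choose', show n + m - 1 = n - 1 + m by omega]
    push_cast
    rw [mul_comm, mul_div_assoc, div_self (by exact_mod_cast m.factorial_ne_zero), mul_one]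
  rw [hasc p, hasc q]
  have hterm : ∀ k ∈ Finset.Icc 1 (min n (p + q)),
      (n.choose k : ℚ) * ((k : ℚ) / ((p + q : ℕ) : ℚ)) * Cgen (p + q) p k
      = ((n.choose k *
          ∑ r ∈ range k, p.choose r * q.choose r * (p + q - r - 1).choose (k - r - 1) : ℕ) : ℚ) := by
    intro k hk
    simp only [Finset.mem_Icc] at hk
    have hk0 : (k : ℚ) ≠ 0 := by
      exact_mod_cast Nat.one_le_iff_ne_zero.mp hk.1
    have hpq0 : ((p + q : ℕ) : ℚ) ≠ 0 := by
      exact_mod_cast Nat.one_le_iff_ne_zero.mp hpq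
    simp only [Cgen, Nat.add_sub_cancel_left, Nat.cast_mul, Nat.cast_sum]
    have h1 : (k : ℚ) / ((p + q : ℕ) : ℚ) * (((p + q : ℕ) : ℚ) / (k : ℚ)) = 1 := by
      rw [div_mul_div_comm, mul_comm]
      exact div_self (mul_ne_zero hpq0 hk0)
    rw [mul_assoc, ← mul_assoc ((k : ℚ) / ((p + q : ℕ) : ℚ)), h1, one_mul]
  rw [Finset.sum_congr rfl hterm]
  have hext : ∑ k ∈ Finset.Icc 1 (min n (p + q)),
      ((n.choose k *
        ∑ r ∈ range k, p.choose r * q.choose r * (p + q - r - 1).choose (k - r - 1) : ℕ) : ℚ)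
      = ∑ k ∈ Finset.Icc 1 (p + q),
      ((n.choose k *
        ∑ r ∈ range k, p.choose r * q.choose r * (p + q - r - 1).choose (k - r - 1) : ℕ) : ℚ) := by
    apply Finset.sum_subset (Finset.Icc_subset_Icc le_rfl (min_le_right _ _))
    intro k hk hnk
    simp only [Finset.mem_Icc] at hk hnk
    have hkn : n < k := by omega
    rw [Nat.choose_eq_zero_of_lt hkn, Nat.zero_mul, Nat.cast_zero]
  rw [hext, ← Nat.cast_sum, key]
  push_cast
  ring
end

section
/- The generalized coefficients satisfy the recurrence p·C(p+q, p; k) = (q+1)·C(p+q, p-1; k) − ((p+q)/(p+q-1))·(q−p+1)·C(p+q-1, p-1; k), for integers p ≥ 1, q ≥ 0 with p+q ≥ 2 and 1 ≤ k. -/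
open Finset

theorem Nat.cast_choose_succ_right_mul {R : Type*} [CommRing R] (n r : ℕ) :
    (n.choose (r + 1) : R) * (r + 1) = n.choose r * (n - r) := by
  rcases le_or_gt r n with h | h
  · have := congrArg (Nat.cast : ℕ → R) (Nat.choose_succ_right_eq n r)
    push_cast [Nat.cast_sub h] at this
    exact this
  · simp [Nat.choose_eq_zero_of_lt h, Nat.choose_eq_zero_of_lt (Nat.lt_succ_of_lt h)]

theorem Nat.cast_choose_succ_succ_mul {R : Type*} [CommRing R] (n r : ℕ) :
    ((n + 1).choose (r + 1) : R) * (r + 1) = (n + 1) * n.choose r := by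
  exact_mod_cast congrArg (Nat.cast : ℕ → R) (Nat.add_one_mul_choose_eq n r).symm

theorem add_one_mul_choose_mul_choose_sub_eq {K : Type*} [Field K] [CharZero K] (a q r : ℕ) :
    ((a : K) + 1) * (a + 1).choose (r + 1) * q.choose (r + 1)
        - ((q : K) + 1) * a.choose (r + 1) * (q + 1).choose (r + 1)
      = ((a : K) - q) * (a.choose (r + 1) * q.choose (r + 1) - a.choose r * q.choose r) := by
  have hr : (r : K) + 1 ≠ 0 := Nat.cast_add_one_ne_zero r
  have ha := Nat.cast_choose_succ_right_mul (R := K) a r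
  have hq := Nat.cast_choose_succ_right_mul (R := K) q r
  have ha' := Nat.cast_choose_succ_succ_mul (R := K) a r
  have hq' := Nat.cast_choose_succ_succ_mul (R := K) q r
  rw [← eq_div_iff hr] at ha hq ha' hq'
  rw [ha, hq, ha', hq']
  field_simp
  ring

theorem sum_range_succ_mul_eq_of_backward_diff {R : Type*} [CommRing R]
    (c d B B' : ℕ → R) (l : R) (m : ℕ)
    (hd₀ : d 0 = l * c 0) (hd : ∀ r, d (r + 1) = l * (c (r + 1) - c r))
    (hB : ∀ r < m, c r * B r = c r * (B' r + B (r + 1))) (hm : B m = B' m) :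
    ∑ r ∈ range (m + 1), d r * B r = l * ∑ r ∈ range (m + 1), c r * B' r := by
  have hsplit : ∑ r ∈ range m, c r * B r
      = ∑ r ∈ range m, c r * B' r + ∑ r ∈ range m, c r * B (r + 1) := by
    rw [← sum_add_distrib]
    exact sum_congr rfl fun r hr => by rw [hB r (mem_range.1 hr)]; ring
  have hshift : ∑ r ∈ range m, c (r + 1) * B (r + 1) + c 0 * B 0
      = ∑ r ∈ range m, c r * B r + c m * B' m := by
    rw [← sum_range_succ' (fun r => c r * B r), sum_range_succ, hm]
  rw [sum_range_succ', sum_range_succ, hd₀]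
  simp only [hd, mul_assoc, ← mul_sum, sub_mul, sum_sub_distrib]
  linear_combination l * hshift + l * hsplit

theorem choose_sub_eq_add_choose_sub_succ {n m r : ℕ} (hn : r < n) (hm : r < m) :
    (n - r).choose (m - r) = (n - 1 - r).choose (m - r) + (n - (r + 1)).choose (m - (r + 1)) := by
  obtain ⟨n', hn'⟩ : ∃ n', n - r = n' + 1 := ⟨n - r - 1, by omega⟩
  obtain ⟨m', hm'⟩ : ∃ m', m - r = m' + 1 := ⟨m - r - 1, by omega⟩
  rw [hn', hm', show n - 1 - r = n' by omega, show n - (r + 1) = n' by omega,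
    show m - (r + 1) = m' by omega, Nat.choose_succ_succ', add_comm]

theorem sum_choose_mul_choose_recurrence {K : Type*} [Field K] [CharZero K]
    (a q m : ℕ) (h : 1 ≤ a + q) :
    ((a : K) + 1) * ∑ r ∈ range (m + 1),
          ((a + 1).choose r : K) * q.choose r * (a + q - r).choose (m - r)
        - ((q : K) + 1) * ∑ r ∈ range (m + 1),
          (a.choose r : K) * (q + 1).choose r * (a + q - r).choose (m - r)
      = ((a : K) - q) * ∑ r ∈ range (m + 1),
          (a.choose r : K) * q.choose r * (a + q - 1 - r).choose (m - r) := by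
  have hpascal : ∀ r < m, (a.choose r : K) * q.choose r * (a + q - r).choose (m - r)
      = a.choose r * q.choose r *
        ((a + q - 1 - r).choose (m - r) + (a + q - (r + 1)).choose (m - (r + 1))) := by
    intro r hr
    by_cases hc : r < a + q
    · rw [choose_sub_eq_add_choose_sub_succ hc hr]
      push_cast
      rfl
    · rcases (show a < r ∨ q < r by omega) with h' | h' <;> simp [Nat.choose_eq_zero_of_lt h']
  rw [mul_sum, mul_sum, ← sum_sub_distrib]
  convert sum_range_succ_mul_eq_of_backward_diff (fun r => (a.choose r : K) * q.choose r)
    (fun r => ((a : K) + 1) * (a + 1).choose r * q.choose r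
      - ((q : K) + 1) * a.choose r * (q + 1).choose r)
    (fun r => ((a + q - r).choose (m - r) : K)) (fun r => ((a + q - 1 - r).choose (m - r) : K))
    _ m (by simp) (add_one_mul_choose_mul_choose_sub_eq a q) hpascal (by simp) using 2 with r
  ring

theorem Cgen_succ (n p m : ℕ) :
    Cgen n p (m + 1) = (n : ℚ) / (m + 1) *
      ∑ r ∈ range (m + 1), (p.choose r : ℚ) * (n - p).choose r * (n - 1 - r).choose (m - r) := by
  unfold Cgen
  push_cast
  congr 1
  exact sum_congr rfl fun r _ => by
    rw [show n - r - 1 = n - 1 - r by omega, show m + 1 - r - 1 = m - r by omega]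

theorem Cgen_recurrence (p q k : ℕ) (hp : 1 ≤ p) (hpq : 2 ≤ p + q) (hk : 1 ≤ k) :
    (p : ℚ) * Cgen (p + q) p k =
      ((q : ℚ) + 1) * Cgen (p + q) (p - 1) k -
        (((p + q : ℕ) : ℚ) / (((p + q : ℕ) : ℚ) - 1)) * ((q : ℚ) - (p : ℚ) + 1) *
          Cgen (p + q - 1) (p - 1) k := by
  obtain ⟨a, rfl⟩ : ∃ a, p = a + 1 := ⟨p - 1, by omega⟩
  obtain ⟨m, rfl⟩ : ∃ m, k = m + 1 := ⟨k - 1, by omega⟩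
  have key := sum_choose_mul_choose_recurrence (K := ℚ) a q m (by omega)
  rw [show a + 1 + q = a + q + 1 by ring, Nat.add_sub_cancel, Nat.add_sub_cancel,
    Cgen_succ, Cgen_succ, Cgen_succ, Nat.add_sub_cancel, show a + q + 1 - (a + 1) = q by omega,
    show a + q + 1 - a = q + 1 by omega, show a + q - a = q by omega]
  have hN : (a : ℚ) + q ≠ 0 := by norm_cast; omega
  push_cast
  rw [add_sub_cancel_right]
  field_simp
  linear_combination key
end
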